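/- Let G be a locally finite connected graph, g : ℕ → ℝ≥0 increasing, and suppose G is (g, ā)-tempered with g(n) ≥ log n: for every vertex x there is a strictly increasing sequence (N_k) such that every animal A ∋ x contained in the ball B_{N_k}(x) with |A| ≥ N_k + 1 satisfies (1/|A|)∑_{y∈A} g(n_G(y)) ≤ ā. Then for every x, every k, and every N ≥ N_k + 1, the number of simple paths ϑ starting at x with exactly N vertices and vertex set contained in B_{N_k}(x) is at most exp(āN). -/
import Mathlib
open SimpleGraph

noncomputable def stmt15wt {V : Type*} (G : SimpleGraph V) [G.LocallyFinite] :
    ∀ {u v : V}, G.Walk u v → ℝ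
  | _, _, .nil => 1
  | u, _, .cons _ q => ((G.degree u : ℝ))⁻¹ * stmt15wt G q

lemma stmt15wt_eq {V : Type*} (G : SimpleGraph V) [G.LocallyFinite] {u v : V} (p : G.Walk u v) :
    stmt15wt G p = (p.support.dropLast.map fun z => ((G.degree z : ℝ))⁻¹).prod := by
  induction p with
  | nil => simp [stmt15wt]
  | cons h q ih =>
    rw [stmt15wt, ih, Walk.support_cons,
      List.dropLast_cons_of_ne_nil q.support_ne_nil, List.map_cons, List.prod_cons]

lemma stmt15wt_nonneg {V : Type*} (G : SimpleGraph V) [G.LocallyFinite] {u v : V}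
    (p : G.Walk u v) : 0 ≤ stmt15wt G p := by
  rw [stmt15wt_eq]
  apply List.prod_nonneg
  intro c hc
  simp only [List.mem_map] at hc
  obtain ⟨z, _, rfl⟩ := hc
  positivity

noncomputable def stmt15F {V : Type*} (G : SimpleGraph V) [G.LocallyFinite] :
    ℕ → (x : V) → Finset (Σ y : V, G.Walk x y)
  | 0, x => {⟨x, .nil⟩}
  | (L+1), x => by
    classical
    exact (G.neighborFinset x).attach.biUnion fun z =>
      (stmt15F G L z.1).image fun p =>
        ⟨p.1, SimpleGraph.Walk.cons ((SimpleGraph.mem_neighborFinset G x z.1).1 z.2) p.2⟩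

lemma stmt15F_complete {V : Type*} (G : SimpleGraph V) [G.LocallyFinite] :
    ∀ (L : ℕ) (x y : V) (p : G.Walk x y), p.length = L →
    (⟨y, p⟩ : Σ y : V, G.Walk x y) ∈ stmt15F G L x := by
  intro L
  induction L with
  | zero =>
    intro x y p hp
    cases p with
    | nil => simp [stmt15F]
    | cons h q => simp at hp
  | succ L ih =>
    intro x y p hp
    cases p with
    | nil => simp at hp
    | cons h q =>
      simp only [Walk.length_cons, Nat.succ_inj] at hp
      classical
      simp only [stmt15F, Finset.mem_biUnion, Finset.mem_attach, Finset.mem_image]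
      refine ⟨⟨_, (SimpleGraph.mem_neighborFinset G x _).2 h⟩, trivial, ⟨y, q⟩, ih _ _ q hp, rfl⟩

lemma stmt15F_sum {V : Type*} (G : SimpleGraph V) [G.LocallyFinite]
    (hdeg : ∀ v : V, 0 < G.degree v) :
    ∀ (L : ℕ) (x : V), ∑ p ∈ stmt15F G L x, stmt15wt G p.2 = 1 := by
  intro L
  induction L with
  | zero => intro x; simp [stmt15F, stmt15wt]
  | succ L ih =>
    intro x
    classical
    rw [stmt15F, Finset.sum_biUnion ?disj]
    case disj =>
      intro z1 _ z2 _ hne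
      simp only [Function.onFun]
      rw [Finset.disjoint_left]
      rintro s hs1 hs2
      simp only [Finset.mem_image] at hs1 hs2
      obtain ⟨p1, _, rfl⟩ := hs1
      obtain ⟨p2, _, h2⟩ := hs2
      apply hne
      have := congrArg (fun s : (Σ y : V, G.Walk x y) => s.2.getVert 1) h2
      simp only [Walk.getVert_cons_succ, Walk.getVert_zero] at this
      exact Subtype.ext this.symm
    have hinj : ∀ (z : {z // z ∈ G.neighborFinset x}),
        Set.InjOn (fun p : (Σ y : V, G.Walk z.1 y) =>
          (⟨p.1, SimpleGraph.Walk.cons ((SimpleGraph.mem_neighborFinset G x z.1).1 z.2) p.2⟩ :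
            Σ y : V, G.Walk x y)) (stmt15F G L z.1) := by
      rintro z ⟨y1, p1⟩ _ ⟨y2, p2⟩ _ h
      obtain ⟨rfl, h2⟩ := Sigma.mk.inj_iff.1 h
      rw [heq_iff_eq] at h2
      rw [Walk.cons.injEq] at h2
      obtain ⟨-, h3⟩ := h2
      rw [heq_iff_eq] at h3
      simp only at h3
      simp [h3]
    calc ∑ z ∈ (G.neighborFinset x).attach,
          ∑ s ∈ (stmt15F G L z.1).image fun p =>
            (⟨p.1, SimpleGraph.Walk.cons ((SimpleGraph.mem_neighborFinset G x z.1).1 z.2) p.2⟩ :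
              Σ y : V, G.Walk x y), stmt15wt G s.2
        = ∑ z ∈ (G.neighborFinset x).attach, ∑ p ∈ stmt15F G L z.1,
            ((G.degree x : ℝ))⁻¹ * stmt15wt G p.2 := by
          refine Finset.sum_congr rfl fun z _ => ?_
          rw [Finset.sum_image (fun p hp q hq h => hinj z hp hq h)]
          rfl
      _ = 1 := by
          simp only [← Finset.mul_sum, ih]
          simp only [mul_one, Finset.sum_const, Finset.card_attach, card_neighborFinset_eq_degree,
            nsmul_eq_mul]
          rw [inv_mul_cancel₀]
          exact_mod_cast (hdeg x).ne'

theorem stmt15 {V : Type*} (G : SimpleGraph V) [G.LocallyFinite]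
    (hconn : G.Connected)
    (g : ℕ → ℝ) (hg : Monotone g) (hglog : ∀ n : ℕ, Real.log n ≤ g n)
    (a : ℝ) (ha : 0 < a) (Nk : V → ℕ → ℕ) (hNk : ∀ x, StrictMono (Nk x))
    (htemp : ∀ (x : V) (k : ℕ) (A : Finset V), x ∈ A →
      (∀ y ∈ A, G.dist x y ≤ Nk x k) →
      (G.induce (A : Set V)).Connected →
      Nk x k + 1 ≤ A.card →
      ∑ y ∈ A, g (G.degree y) ≤ a * A.card) :
    ∀ (x : V) (k : ℕ) (N : ℕ), Nk x k ≤ N →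
      ({p : Σ y : V, G.Walk x y |
          p.2.support.Nodup ∧ p.2.length = N - 1 ∧ Nk x k ≤ p.2.length ∧
          ∀ z ∈ p.2.support, G.dist x z ≤ Nk x k}.ncard : ℝ)
        ≤ Real.exp (a * N) := by
  intro x k N hNN
  classical
  set S : Set (Σ y : V, G.Walk x y) := {p : Σ y : V, G.Walk x y |
      p.2.support.Nodup ∧ p.2.length = N - 1 ∧ Nk x k ≤ p.2.length ∧
      ∀ z ∈ p.2.support, G.dist x z ≤ Nk x k} with hSdef
  have haN : (0:ℝ) ≤ a * N := by positivity
  by_cases hV : Nontrivial V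
  · -- main case
    have hdeg : ∀ v : V, 0 < G.degree v := by
      intro v
      obtain ⟨u, hu⟩ := exists_ne v
      obtain ⟨p⟩ := hconn.preconnected v u
      cases p with
      | nil => exact absurd rfl hu.symm
      | cons h q => exact (G.degree_pos_iff_exists_adj v).2 ⟨_, h⟩
    set T : Finset (Σ y : V, G.Walk x y) := (stmt15F G (N-1) x).filter (· ∈ S) with hTdef
    have hST : S = ↑T := by
      ext p
      simp only [hTdef, Finset.coe_filter, Set.mem_setOf_eq]
      exact ⟨fun hp => ⟨stmt15F_complete G (N-1) x p.1 p.2 hp.2.1, hp⟩, fun hp => hp.2⟩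
    have hlow : ∀ p ∈ T, Real.exp (-(a * N)) ≤ stmt15wt G p.2 := by
      intro p hp
      have hpS : p ∈ S := (Finset.mem_filter.1 hp).2
      obtain ⟨hnd, hlen, hlk, hball⟩ := hpS
      by_cases hN : N = 0
      · subst hN
        have hlen0 : p.2.length = 0 := hlen
        have : p.2.support.dropLast = [] := by
          have := p.2.length_support
          rw [hlen0] at this
          cases hsupp : p.2.support with
          | nil => simp
          | cons c l =>
            rw [hsupp] at this
            simp at this
            simp [this]
        rw [stmt15wt_eq, this]
        simp
      · have hN1 : 1 ≤ N := Nat.one_le_iff_ne_zero.2 hN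
        set A : Finset V := p.2.support.toFinset with hAdef
        have hcardA : A.card = N := by
          rw [hAdef, List.card_toFinset, hnd.dedup, Walk.length_support, hlen]
          omega
        have hxA : x ∈ A := by
          rw [hAdef, List.mem_toFinset]; exact p.2.start_mem_support
        have hconnA : (G.induce (A : Set V)).Connected := by
          have : (A : Set V) = {v | v ∈ p.2.support} := by
            ext z; simp [hAdef]
          rw [this]
          exact p.2.connected_induce_support
        have hcard2 : Nk x k + 1 ≤ A.card := by
          rw [hcardA]; omega
        have hsum := htemp x k A hxA (fun y hy => hball y (List.mem_toFinset.1 hy)) hconnA hcard2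
        rw [hcardA] at hsum
        have hlog : ∑ y ∈ A, Real.log (G.degree y) ≤ a * N :=
          le_trans (Finset.sum_le_sum fun y _ => hglog (G.degree y)) hsum
        have hprodle : ∏ y ∈ A, (G.degree y : ℝ) ≤ Real.exp (a * N) := by
          have : ∏ y ∈ A, (G.degree y : ℝ) = Real.exp (∑ y ∈ A, Real.log (G.degree y)) := by
            rw [Real.exp_sum]
            exact Finset.prod_congr rfl fun y _ => by
              rw [Real.exp_log (by exact_mod_cast hdeg y)]
          rw [this]
          exact Real.exp_le_exp.2 hlog
        have hprodpos : (0:ℝ) < ∏ y ∈ A, (G.degree y : ℝ) :=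
          Finset.prod_pos fun y _ => by exact_mod_cast hdeg y
        have hinvA : Real.exp (-(a * N)) ≤ ∏ y ∈ A, ((G.degree y : ℝ))⁻¹ := by
          rw [Finset.prod_inv_distrib, Real.exp_neg]
          exact inv_anti₀ hprodpos hprodle
        refine hinvA.trans ?_
        -- ∏_A ≤ wt
        have hf : ∀ z : V, ((G.degree z : ℝ))⁻¹ ≤ 1 := by
          intro z
          rw [inv_le_one_iff₀]
          right
          exact_mod_cast hdeg z
        have hfpos : ∀ z : V, (0:ℝ) < ((G.degree z : ℝ))⁻¹ := by
          intro z
          have := hdeg z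
          positivity
        have hsplit := List.dropLast_append_getLast p.2.support_ne_nil
        have hprodA : ∏ y ∈ A, ((G.degree y : ℝ))⁻¹
            = stmt15wt G p.2 * ((G.degree (p.2.support.getLast p.2.support_ne_nil) : ℝ))⁻¹ := by
          rw [hAdef, List.prod_toFinset _ hnd, stmt15wt_eq]
          conv_lhs => rw [← hsplit]
          rw [List.map_append, List.prod_append, List.map_singleton, List.prod_singleton]
        rw [hprodA]
        have hwtpos : 0 < stmt15wt G p.2 := by
          rw [stmt15wt_eq]
          apply List.prod_pos
          intro c hc
          simp only [List.mem_map] at hc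
          obtain ⟨z, _, rfl⟩ := hc
          exact hfpos z
        calc stmt15wt G p.2 * ((G.degree (p.2.support.getLast p.2.support_ne_nil) : ℝ))⁻¹
            ≤ stmt15wt G p.2 * 1 := by
              exact mul_le_mul_of_nonneg_left (hf _) hwtpos.le
          _ = stmt15wt G p.2 := mul_one _
    have hsumle : (T.card : ℝ) * Real.exp (-(a * N)) ≤ 1 := by
      calc (T.card : ℝ) * Real.exp (-(a * N)) = ∑ _p ∈ T, Real.exp (-(a * N)) := by
            rw [Finset.sum_const, nsmul_eq_mul]
        _ ≤ ∑ p ∈ T, stmt15wt G p.2 := Finset.sum_le_sum hlow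
        _ ≤ ∑ p ∈ stmt15F G (N-1) x, stmt15wt G p.2 :=
            Finset.sum_le_sum_of_subset_of_nonneg (Finset.filter_subset _ _)
              (fun p _ _ => stmt15wt_nonneg G p.2)
        _ = 1 := stmt15F_sum G hdeg (N-1) x
    have hcard : (S.ncard : ℝ) = T.card := by rw [hST, Set.ncard_coe_finset]
    rw [hcard]
    calc (T.card : ℝ) = (T.card : ℝ) * Real.exp (-(a * N)) * Real.exp (a * N) := by
          rw [mul_assoc, ← Real.exp_add, neg_add_cancel, Real.exp_zero, mul_one]
      _ ≤ 1 * Real.exp (a * N) := by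
          exact mul_le_mul_of_nonneg_right hsumle (Real.exp_pos _).le
      _ = Real.exp (a * N) := one_mul _
  · -- subsingleton case
    rw [not_nontrivial_iff_subsingleton] at hV
    have hsub : S ⊆ {⟨x, SimpleGraph.Walk.nil⟩} := by
      rintro ⟨y, p⟩ hp
      cases p with
      | nil => rfl
      | cons h q => exact absurd (Subsingleton.elim _ _) (G.ne_of_adj h)
    have : (S.ncard : ℝ) ≤ 1 := by
      have := Set.ncard_le_ncard hsub (Set.finite_singleton _)
      rw [Set.ncard_singleton] at this
      exact_mod_cast this
    exact this.trans (Real.one_le_exp haN)
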